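/- Let d_1,...,d_k ≥ 1 be positive integers and write C̃^{d_1,...,d_k}(N) = Σ_j C̃^{d_1,...,d_k}_j N^j as a polynomial in N. Then C̃^{d_1,...,d_k}_j = 0 whenever j is not congruent to k - 1 + Σ_{i=1}^k d_i modulo 2. -/

import Mathlib

/-!
The polynomial `C̃^{d₁,…,d_k}` satisfies `C̃(-x) = (-1)^(k - 1 + ∑ dᵢ) C̃(x)`, which is exactly the
vanishing of the coefficients of the wrong parity. We argue by induction on `k`: peeling off the
first coordinate,
  `C̃^{d₀,d}(N) = ∑_{m=0}^{N} m^{d₀} q(N - m)`  with  `q = C̃^{d}`.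
Expanding `q(N - m)` in powers of `m` by Taylor's formula at `N` turns this into
`∑ⱼ (-1)ʲ (∂⁽ʲ⁾q)(N) S_{d₀+j}(N + 1)`, where `∂⁽ʲ⁾` is the `j`-th Hasse derivative and
`S_c(n) = ∑_{m<n} m^c` is the Faulhaber polynomial. The
reflection `S_c(1 - x) = (-1)^(c+1) S_c(x)` (for `c ≥ 1`, from that of the Bernoulli polynomials)
then gives the reflection of the convolution, up to a boundary term `x^{d₀} q(0)`, which vanishes
because `q(0) = C̃^{d}(0) = 0`.
-/

open Polynomial Finset

theorem Finset.Nat.sum_antidiagonalTuple_succ {M : Type*} [AddCommMonoid M] (k n : ℕ)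
    (f : (Fin (k + 1) → ℕ) → M) :
    ∑ a ∈ antidiagonalTuple (k + 1) n, f a =
      ∑ p ∈ antidiagonal n, ∑ t ∈ antidiagonalTuple k p.2, f (Fin.cons p.1 t) := by
  change (Multiset.map f ↑(List.Nat.antidiagonalTuple (k + 1) n)).sum =
    (Multiset.map _ (List.Nat.antidiagonal n : Multiset (ℕ × ℕ))).sum
  simp only [List.Nat.antidiagonalTuple, List.flatMap, Multiset.map_coe, Multiset.sum_coe,
    List.map_flatten, List.sum_flatten, List.map_map]
  congr 1
  refine List.map_congr_left fun p _ => ?_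
  change _ = (Multiset.map _ (List.Nat.antidiagonalTuple k p.2 : Multiset (Fin k → ℕ))).sum
  simp only [Multiset.map_coe, Multiset.sum_coe, Function.comp_def, List.map_map]

namespace Polynomial

variable {R : Type*}

def HasParity [Semiring R] (p : R[X]) (e : ℕ) : Prop :=
  ∀ n, n % 2 ≠ e % 2 → p.coeff n = 0

theorem hasParity_X_pow [Semiring R] (e : ℕ) : (X ^ e : R[X]).HasParity e := by
  intro n hn
  rw [coeff_X_pow, if_neg (by rintro rfl; exact hn rfl)]

theorem HasParity.hasseDeriv [Semiring R] {p : R[X]} {e : ℕ} (hp : p.HasParity e) (j : ℕ) :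
    (hasseDeriv j p).HasParity (e + j) := by
  intro n hn
  rw [hasseDeriv_coeff, hp (n + j) (by omega), mul_zero]

theorem HasParity.eval_neg [CommRing R] {p : R[X]} {e : ℕ} (hp : p.HasParity e) (x : R) :
    p.eval (-x) = (-1) ^ e * p.eval x := by
  simp only [eval_eq_sum_range, mul_sum]
  refine sum_congr rfl fun n _ => ?_
  by_cases hn : n % 2 = e % 2
  · rw [neg_pow, neg_one_pow_eq_pow_mod_two, hn, ← neg_one_pow_eq_pow_mod_two]
    ring
  · simp [hp n hn]

theorem hasParity_of_eval_neg [CommRing R] [IsDomain R] [CharZero R] {p : R[X]} {e : ℕ}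
    (h : ∀ x, p.eval (-x) = (-1) ^ e * p.eval x) : p.HasParity e := by
  intro n hn
  have hcomp : p.comp (C (-1) * X) = C ((-1) ^ e) * p :=
    Polynomial.funext fun x => by simp [h]
  have hcoeff := congrArg (coeff · n) hcomp
  simp only [comp_C_mul_X_coeff, coeff_C_mul] at hcoeff
  have hsq : ((-1 : R) ^ e) ^ 2 = 1 := by rw [← pow_mul, pow_mul', neg_one_sq, one_pow]
  have hodd : (-1 : R) ^ (n + e) = -1 := (Nat.odd_iff.2 (by omega)).neg_one_pow
  have hneg : -p.coeff n = p.coeff n := by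
    linear_combination (-1 : R) ^ e * hcoeff + p.coeff n * hsq -
      p.coeff n * (pow_add _ n e).symm.trans hodd
  exact CharZero.neg_eq_self_iff.1 hneg

theorem eval_add_eq_sum_hasseDeriv [CommSemiring R] (q : R[X]) (x y : R) :
    q.eval (x + y) = ∑ j ∈ range (q.natDegree + 1), (hasseDeriv j q).eval x * y ^ j := by
  rw [add_comm, ← taylor_eval, eval_eq_sum_range, natDegree_taylor]
  simp only [taylor_coeff]

noncomputable def powerSum (c : ℕ) : ℚ[X] :=
  C (c + 1 : ℚ)⁻¹ * (bernoulli (c + 1) - C (_root_.bernoulli (c + 1)))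

theorem powerSum_eval_natCast (c n : ℕ) :
    (powerSum c).eval (n : ℚ) = ∑ m ∈ range n, (m : ℚ) ^ c := by
  have h := sum_range_pow_eq_bernoulli_sub n c
  simp only [powerSum, eval_mul, eval_C, eval_sub]
  rw [← h]
  field_simp

theorem powerSum_eval_add_one (c : ℕ) (x : ℚ) :
    (powerSum c).eval (x + 1) = (powerSum c).eval x + x ^ c := by
  simp only [powerSum, eval_mul, eval_C, eval_sub, add_comm x 1, bernoulli_eval_one_add]
  field_simp
  push_cast
  ring

theorem powerSum_eval_one_sub {c : ℕ} (hc : 1 ≤ c) (x : ℚ) :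
    (powerSum c).eval (1 - x) = (-1) ^ (c + 1) * (powerSum c).eval x := by
  have hB : (-1) ^ (c + 1) * _root_.bernoulli (c + 1) = _root_.bernoulli (c + 1) := by
    have h1 := bernoulli_eval_one_sub (c + 1) 0
    have h2 := bernoulli_eval_one_add (c + 1) 0
    simp only [sub_zero, add_zero, bernoulli_eval_zero, zero_pow (by omega : c + 1 - 1 ≠ 0),
      mul_zero] at h1 h2
    rw [← h1, h2]
  simp only [powerSum, eval_mul, eval_C, eval_sub, bernoulli_eval_one_sub]
  linear_combination (c + 1 : ℚ)⁻¹ * hB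

noncomputable def powConv (a : ℕ) (q : ℚ[X]) : ℚ[X] :=
  ∑ j ∈ range (q.natDegree + 1), C ((-1) ^ j) * hasseDeriv j q * (powerSum (a + j)).comp (X + 1)

theorem powConv_eval_natCast (a : ℕ) (q : ℚ[X]) (N : ℕ) :
    (powConv a q).eval (N : ℚ) = ∑ m ∈ range (N + 1), (m : ℚ) ^ a * q.eval ((N : ℚ) - m) := by
  have hS : ∀ j, (powerSum (a + j)).eval ((N : ℚ) + 1) =
      ∑ m ∈ range (N + 1), (m : ℚ) ^ (a + j) := by
    intro j
    exact_mod_cast powerSum_eval_natCast (a + j) (N + 1)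
  simp only [powConv, eval_finsetSum, eval_mul, eval_C, eval_comp, eval_add, eval_X, eval_one, hS,
    sub_eq_add_neg, eval_add_eq_sum_hasseDeriv q, mul_sum]
  rw [sum_comm]
  refine sum_congr rfl fun m _ => sum_congr rfl fun j _ => ?_
  rw [neg_pow, pow_add]
  ring

theorem powConv_eval_neg {a e : ℕ} (ha : 1 ≤ a) {q : ℚ[X]} (hq : q.HasParity e) (x : ℚ) :
    (powConv a q).eval (-x) = (-1) ^ (a + e + 1) * ((powConv a q).eval x - x ^ a * q.eval 0) := by
  have hterm : ∀ j, (-1) ^ j * (hasseDeriv j q).eval (-x) * (powerSum (a + j)).eval (-x + 1) =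
      (-1) ^ (a + e + 1) * ((-1) ^ j * (hasseDeriv j q).eval x * (powerSum (a + j)).eval (x + 1) -
        x ^ a * ((hasseDeriv j q).eval x * (-x) ^ j)) := by
    intro j
    have hsq : ((-1 : ℚ) ^ j) ^ 2 = 1 := by rw [← pow_mul, pow_mul', neg_one_sq, one_pow]
    rw [(hq.hasseDeriv j).eval_neg, neg_add_eq_sub, powerSum_eval_one_sub (by omega),
      powerSum_eval_add_one, neg_pow x, pow_add x]
    linear_combination (-1) ^ (a + e + 1) * (-1) ^ j * (hasseDeriv j q).eval x *
      (powerSum (a + j)).eval x * hsq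
  have hq0 : q.eval 0 = ∑ j ∈ range (q.natDegree + 1), (hasseDeriv j q).eval x * (-x) ^ j := by
    rw [← eval_add_eq_sum_hasseDeriv, add_neg_cancel]
  simp only [powConv, eval_finsetSum, eval_mul, eval_C, eval_comp, eval_add, eval_X, eval_one,
    hterm, ← mul_sum, hq0, sum_sub_distrib]

theorem HasParity.powConv {a e : ℕ} (ha : 1 ≤ a) {q : ℚ[X]} (hq : q.HasParity e)
    (hq0 : q.eval 0 = 0) : (powConv a q).HasParity (a + e + 1) :=
  hasParity_of_eval_neg fun x => by rw [powConv_eval_neg ha hq, hq0, mul_zero, sub_zero]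

end Polynomial

theorem exists_hasParity_eval_eq_sum_antidiagonalTuple (k : ℕ) (d : Fin (k + 1) → ℕ)
    (hd : ∀ i, 1 ≤ d i) :
    ∃ P : ℚ[X], (∀ N : ℕ, P.eval (N : ℚ) =
        ∑ a ∈ Finset.Nat.antidiagonalTuple (k + 1) N, ∏ i, (a i : ℚ) ^ d i) ∧
      P.HasParity (k + ∑ i, d i) := by
  induction k with
  | zero => exact ⟨X ^ d 0, fun N => by simp, by simpa using hasParity_X_pow (d 0)⟩
  | succ k ih =>
    obtain ⟨q, hq_eval, hq_par⟩ := ih (fun i => d i.succ) (fun i => hd i.succ)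
    have hq0 : q.eval 0 = 0 := by
      rw [← Nat.cast_zero, hq_eval, Finset.Nat.antidiagonalTuple_zero_right, sum_singleton]
      exact prod_eq_zero (mem_univ 0) (by simp [Nat.one_le_iff_ne_zero.1 (hd 1)])
    refine ⟨powConv (d 0) q, fun N => ?_, ?_⟩
    · rw [powConv_eval_natCast, Finset.Nat.sum_antidiagonalTuple_succ,
        Finset.Nat.sum_antidiagonal_eq_sum_range_succ_mk]
      refine sum_congr rfl fun m hm => ?_
      rw [← Nat.cast_sub (by simpa [Nat.lt_succ_iff] using hm), hq_eval, mul_sum]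
      simp [Fin.prod_univ_succ]
    · have he : d 0 + (k + ∑ i : Fin (k + 1), d i.succ) + 1 = k + 1 + ∑ i, d i := by
        rw [Fin.sum_univ_succ d]
        ring
      exact he ▸ (hq_par.powConv (hd 0) hq0)

/-- For `d₁,...,d_k ≥ 1`, writing `C̃^{d₁,...,d_k}(N) = ∑_j C̃_j N^j` as a
polynomial in `N`, the coefficient `C̃_j` vanishes whenever
`j ≢ k - 1 + ∑ dᵢ (mod 2)`. -/
theorem tildeC_coeff_parity (k : ℕ) (hk : 1 ≤ k) (d : Fin k → ℕ) (hd : ∀ i, 1 ≤ d i)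
    (p : Polynomial ℚ)
    (hp : ∀ N : ℕ, p.eval (N : ℚ) =
        ∑ a ∈ Finset.Nat.antidiagonalTuple k N, ∏ i : Fin k, (a i : ℚ) ^ d i)
    (j : ℕ) (hj : j % 2 ≠ (k - 1 + ∑ i, d i) % 2) :
    p.coeff j = 0 := by
  obtain ⟨k, rfl⟩ := Nat.exists_eq_add_of_le' hk
  obtain ⟨P, hP_eval, hP_par⟩ := exists_hasParity_eval_eq_sum_antidiagonalTuple k d hd
  have hpP : p = P := eq_of_infinite_eval_eq p P <|
    Set.infinite_of_injective_forall_mem Nat.cast_injective fun N => by simp [hp, hP_eval]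
  exact hpP ▸ hP_par j (by simpa using hj)
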